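/- Let ω_x > 0 and γ₋ ≥ 0, and consider the non-Hermitian Hamiltonian H_eff = (ω_x/2)σ_x − i(γ₋/2)σ₊σ₋ ∈ M₂(ℂ). Then the eigenvalues of H_eff are h_{1,2} = (1/4)(−iγ₋ ∓ ζ) for any ζ ∈ ℂ with ζ² = 4ω_x² − γ₋². Moreover, at γ₋ = 2ω_x the two eigenvalues coincide (h₁ = h₂ = −iγ₋/4) and the eigenspace of H_eff for this eigenvalue is one-dimensional, so H_eff is not diagonalizable: the system has a Hamiltonian exceptional point at γ₋/ω_x = 2. -/
import Mathlib

open Matrix Complex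

noncomputable section

def σx : Matrix (Fin 2) (Fin 2) ℂ := !![0, 1; 1, 0]
def σp : Matrix (Fin 2) (Fin 2) ℂ := !![0, 1; 0, 0]
def σm : Matrix (Fin 2) (Fin 2) ℂ := !![0, 0; 1, 0]

def HeffDriven (ωx γm : ℝ) : Matrix (Fin 2) (Fin 2) ℂ :=
  ((ωx : ℂ) / 2) • σx - (Complex.I * ((γm : ℂ) / 2)) • (σp * σm)

lemma Heff_eq (ωx γm : ℝ) :
    HeffDriven ωx γm = !![-(Complex.I * γm / 2), (ωx : ℂ)/2; (ωx : ℂ)/2, 0] := by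
  ext i j
  fin_cases i <;> fin_cases j <;>
    simp [HeffDriven, σx, σp, σm, Matrix.mul_apply, Fin.sum_univ_two] <;> ring

/-- The eigenvalues of `H_eff = (ω_x/2)σ_x − i(γ₋/2)σ₊σ₋` are
`h_{1,2} = (1/4)(−iγ₋ ∓ ζ)` for any `ζ` with `ζ² = 4ω_x² − γ₋²`; and at
`γ₋ = 2ω_x` the eigenvalues coincide (`h₁ = h₂ = −iγ₋/4`) with a
one-dimensional eigenspace: a Hamiltonian exceptional point at
`γ₋/ω_x = 2`. -/
theorem driven_qubit_HEP (ωx γm : ℝ) (hωx : 0 < ωx) (hγm : 0 ≤ γm) :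
    (∀ ζ : ℂ, ζ ^ 2 = 4 * (ωx : ℂ) ^ 2 - (γm : ℂ) ^ 2 →
      ∀ h : ℂ,
        (∃ v : Fin 2 → ℂ, v ≠ 0 ∧ (HeffDriven ωx γm).mulVec v = h • v) ↔
          (h = (-(Complex.I * γm) - ζ) / 4 ∨ h = (-(Complex.I * γm) + ζ) / 4)) ∧
    (γm = 2 * ωx →
      Module.finrank ℂ
        ↥(Module.End.eigenspace (HeffDriven ωx γm).mulVecLin
            (-(Complex.I * γm) / 4)) = 1) := by
  constructor
  · intro ζ hζ h
    have key : (∃ v : Fin 2 → ℂ, v ≠ 0 ∧ (HeffDriven ωx γm).mulVec v = h • v) ↔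
        (HeffDriven ωx γm - h • 1).det = 0 := by
      rw [← Matrix.exists_mulVec_eq_zero_iff]
      constructor
      · rintro ⟨v, hv, heq⟩
        exact ⟨v, hv, by rw [Matrix.sub_mulVec, Matrix.smul_mulVec,
          Matrix.one_mulVec, heq, sub_self]⟩
      · rintro ⟨v, hv, heq⟩
        refine ⟨v, hv, ?_⟩
        rw [Matrix.sub_mulVec, Matrix.smul_mulVec, Matrix.one_mulVec,
          sub_eq_zero] at heq
        exact heq
    rw [key]
    have hdet : (HeffDriven ωx γm - h • 1).det =
        (h - (-(Complex.I * γm) - ζ) / 4) * (h - (-(Complex.I * γm) + ζ) / 4) := by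
      rw [Heff_eq]
      rw [show (!![-(Complex.I * γm / 2), (ωx : ℂ)/2; (ωx : ℂ)/2, 0] - h • 1) =
          !![-(Complex.I * γm / 2) - h, (ωx : ℂ)/2; (ωx : ℂ)/2, -h] from by
        ext i j; fin_cases i <;> fin_cases j <;>
          simp [Matrix.sub_apply, Matrix.smul_apply, Matrix.one_apply]]
      rw [Matrix.det_fin_two_of]
      linear_combination hζ / 16 - (γm : ℂ) ^ 2 / 16 * Complex.I_sq
    rw [hdet, mul_eq_zero, sub_eq_zero, sub_eq_zero]
  · intro hγ
    subst hγ
    have hμ : (-(Complex.I * ((2 * ωx : ℝ) : ℂ)) / 4) = -(Complex.I * ωx) / 2 := by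
      push_cast; ring
    have hv : (![1, Complex.I] : Fin 2 → ℂ) ≠ 0 := by
      intro hcon
      have := congrFun hcon 0
      simp at this
    have hspan : Module.End.eigenspace (HeffDriven ωx (2 * ωx)).mulVecLin
        (-(Complex.I * ((2 * ωx : ℝ) : ℂ)) / 4) =
        Submodule.span ℂ {(![1, Complex.I] : Fin 2 → ℂ)} := by
      apply le_antisymm
      · intro x hx
        rw [Module.End.mem_eigenspace_iff] at hx
        have h0 := congrFun hx 0
        simp [Heff_eq, Matrix.mulVecLin_apply, Matrix.mulVec, dotProduct,
          Fin.sum_univ_two] at h0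
        have hωx' : (ωx : ℂ) ≠ 0 := by exact_mod_cast hωx.ne'
        have hx1 : x 1 = Complex.I * x 0 := by
          have h2 : (ωx : ℂ) / 2 * (x 1 - Complex.I * x 0) = 0 := by
            linear_combination h0
          rcases mul_eq_zero.mp h2 with h3 | h3
          · exfalso
            rcases div_eq_zero_iff.mp h3 with h4 | h4
            · exact hωx' h4
            · norm_num at h4
          · exact sub_eq_zero.mp h3
        rw [Submodule.mem_span_singleton]
        refine ⟨x 0, ?_⟩
        funext i
        fin_cases i <;> simp [hx1] <;> ring
      · rw [Submodule.span_le, Set.singleton_subset_iff]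
        rw [SetLike.mem_coe, Module.End.mem_eigenspace_iff]
        funext i
        fin_cases i <;>
          simp [Heff_eq, Matrix.mulVecLin_apply, Matrix.mulVec, dotProduct,
            Fin.sum_univ_two] <;> push_cast <;> ring_nf <;>
          rw [Complex.I_sq] <;> ring
    rw [hspan, finrank_span_singleton hv]

end
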